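/- arXiv:0905.4758 — 2 statements merged into one kernel-verified Lean document; each statement's English description precedes it below -/
import Mathlib

section
/- Define F(n) = Σ_{π ∈ S_n} q^{des(π)}, where des(π) is the number of descents of π. Then for n ≥ 1, F(n) = Σ_{k=1}^{n} C(n,k) (q−1)^{k−1} F(n−k), with F(0) = 1. -/
open Finset Polynomial

/-- A permutation of `Fin n` as a word `{0,...,n-1} → {1,...,n}`. -/
def toWord (n : ℕ) (π : Equiv.Perm (Fin n)) : ℕ → ℕ :=
  fun k => if h : k < n then (π ⟨k, h⟩ : ℕ) + 1 else 0

/-- The number of descents of the word `w` of length `ℓ`. -/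
def desCount (w : ℕ → ℕ) (ℓ : ℕ) : ℕ :=
  ((range (ℓ - 1)).filter (fun i => w (i + 1) < w i)).card

/-- `F n = Σ_{π ∈ S_n} q^{des π}`. -/
noncomputable def F (n : ℕ) : Polynomial ℤ :=
  ∑ π : Equiv.Perm (Fin n), (X : Polynomial ℤ) ^ desCount (toWord n π) n

/-!
Telescoping `q ^ (a + 1) = q ^ a + (q - 1) * q ^ a` along the initial decreasing run of `π` gives
`q ^ des π = ∑ (q - 1) ^ (k - 1) * q ^ (number of descents among the last n - k entries of π)`,
summed over the `k ≥ 1` for which the first `k` entries of `π` decrease. Such a permutation is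
determined by the set of its first `k` entries and the relative order of the remaining ones, and its
descents among the last `n - k` entries are those of that pattern; so the `k`-th part of the sum over
all `π` is `C(n, k) (q - 1) ^ (k - 1) F(n - k)`.
-/

section Words

variable (w : ℕ → ℕ)

/-- Descents of the word `w 0, …, w (ℓ - 1)` among its letters `w i, …, w (ℓ - 1)`. -/
def descentsFrom (i ℓ : ℕ) : ℕ :=
  ((Ico i (ℓ - 1)).filter fun j => w (j + 1) < w j).card

def IsDecreasingPrefix (k : ℕ) : Prop :=
  ∀ i, i + 1 < k → w (i + 1) < w i

instance : DecidablePred (IsDecreasingPrefix w) := fun k =>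
  decidable_of_iff (∀ i < k - 1, w (i + 1) < w i)
    (forall_congr' fun _ => by rw [Nat.lt_sub_iff_add_lt])

variable {w}

lemma desCount_eq_descentsFrom_zero (ℓ : ℕ) : desCount w ℓ = descentsFrom w 0 ℓ := by
  rw [desCount, descentsFrom, range_eq_Ico]

lemma desCount_congr {v : ℕ → ℕ} {ℓ : ℕ}
    (h : ∀ i, i + 1 < ℓ → (w (i + 1) < w i ↔ v (i + 1) < v i)) : desCount w ℓ = desCount v ℓ := by
  unfold desCount
  congr 1
  exact filter_congr fun i hi => h i (by rw [mem_range] at hi; omega)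

lemma descentsFrom_add (k m : ℕ) :
    descentsFrom w k (k + m) = desCount (fun j => w (k + j)) m := by
  rw [descentsFrom, desCount]
  refine card_nbij' (· - k) (· + k) ?_ ?_ ?_ ?_ <;> intro i hi <;>
    simp only [coe_filter, mem_Ico, mem_range, Set.mem_ofPred_eq] at hi ⊢
  · rw [show k + (i - k) = i by omega, show k + (i - k + 1) = i + 1 by omega]
    exact ⟨by omega, hi.2⟩
  · rw [add_comm i k, add_assoc]
    exact ⟨by omega, hi.2⟩
  · omega
  · omega

lemma descentsFrom_eq_zero {i ℓ : ℕ} (h : ℓ ≤ i + 1) : descentsFrom w i ℓ = 0 := by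
  rw [descentsFrom, Ico_eq_empty (by omega), filter_empty, card_empty]

lemma descentsFrom_eq_add_ite {i ℓ : ℕ} (h : i + 1 < ℓ) :
    descentsFrom w i ℓ = descentsFrom w (i + 1) ℓ + if w (i + 1) < w i then 1 else 0 := by
  rw [descentsFrom, descentsFrom, ← insert_Ico_add_one_left_eq_Ico (by omega), filter_insert]
  split_ifs
  · rw [card_insert_of_notMem (by simp)]
  · rfl

lemma isDecreasingPrefix_one : IsDecreasingPrefix w 1 := fun _ hi => absurd hi (by omega)

lemma IsDecreasingPrefix.mono {j k : ℕ} (h : IsDecreasingPrefix w k) (hjk : j ≤ k) :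
    IsDecreasingPrefix w j := fun i hi => h i (by omega)

lemma isDecreasingPrefix_add_two {i : ℕ} :
    IsDecreasingPrefix w (i + 2) ↔ IsDecreasingPrefix w (i + 1) ∧ w (i + 1) < w i := by
  refine ⟨fun h => ⟨h.mono (by omega), h i (by omega)⟩, fun ⟨h, hi⟩ j hj => ?_⟩
  obtain hj | rfl : j + 1 < i + 1 ∨ j = i := by omega
  · exact h j hj
  · exact hi

lemma IsDecreasingPrefix.strictAntiOn {k : ℕ} (h : IsDecreasingPrefix w k) :
    StrictAntiOn w (Set.Iio k) := by
  intro i hi j hj hij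
  have := strictAntiOn_Iic_of_succ_lt (ψ := w) (n := k - 1) fun m hm => by
    rw [Order.succ_eq_add_one]; exact h m (by omega)
  exact this (by simp at hi ⊢; omega) (by simp at hj ⊢; omega) hij

end Words

section Telescoping

variable {R : Type*} [CommRing R] (q : R) {w : ℕ → ℕ}

lemma sum_filter_isDecreasingPrefix_Icc {ℓ i : ℕ} (hi : i < ℓ) (hw : IsDecreasingPrefix w (i + 1)) :
    ∑ k ∈ (Icc (i + 1) ℓ).filter (IsDecreasingPrefix w),
      (q - 1) ^ (k - (i + 1)) * q ^ descentsFrom w k ℓ = q ^ descentsFrom w i ℓ := by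
  obtain ⟨d, rfl⟩ := Nat.exists_eq_add_of_lt hi
  induction d generalizing i with
  | zero =>
    rw [add_zero, Icc_self, filter_singleton, if_pos hw, sum_singleton, Nat.sub_self, pow_zero,
      one_mul, descentsFrom_eq_zero (i := i + 1) (by omega), descentsFrom_eq_zero (i := i) le_rfl]
  | succ d ih =>
    rw [← insert_Icc_add_one_left_eq_Icc (by omega), filter_insert, if_pos hw,
      sum_insert (by simp), Nat.sub_self, pow_zero, one_mul, descentsFrom_eq_add_ite (i := i) (by omega)]
    by_cases hdes : w (i + 1) < w i
    · have ih' := ih (i := i + 1) (isDecreasingPrefix_add_two.2 ⟨hw, hdes⟩) (by omega)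
      rw [show i + 1 + d + 1 = i + (d + 1) + 1 by omega] at ih'
      have hshift : ∑ k ∈ (Icc (i + 1 + 1) (i + (d + 1) + 1)).filter (IsDecreasingPrefix w),
          (q - 1) ^ (k - (i + 1)) * q ^ descentsFrom w k (i + (d + 1) + 1)
          = (q - 1) * q ^ descentsFrom w (i + 1) (i + (d + 1) + 1) := by
        rw [← ih', mul_sum]
        refine sum_congr rfl fun k hk => ?_
        have hk : i + 1 + 1 ≤ k := (mem_Icc.1 (mem_filter.1 hk).1).1
        rw [show k - (i + 1) = k - (i + 1 + 1) + 1 by omega, pow_succ]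
        ring
      rw [hshift, if_pos hdes, pow_succ]
      ring
    · have hnone : (Icc (i + 1 + 1) (i + (d + 1) + 1)).filter (IsDecreasingPrefix w) = ∅ :=
        filter_eq_empty_iff.2 fun k hk hk' => hdes <|
          (isDecreasingPrefix_add_two.1 (hk'.mono (mem_Icc.1 hk).1)).2
      rw [hnone, sum_empty, if_neg hdes, add_zero, add_zero]

theorem pow_desCount_eq_sum {ℓ : ℕ} (hℓ : 1 ≤ ℓ) :
    q ^ desCount w ℓ = ∑ k ∈ (Icc 1 ℓ).filter (IsDecreasingPrefix w),
      (q - 1) ^ (k - 1) * q ^ descentsFrom w k ℓ := by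
  rw [desCount_eq_descentsFrom_zero]
  exact (sum_filter_isDecreasingPrefix_Icc q hℓ isDecreasingPrefix_one).symm

end Telescoping

section Permutations

open Equiv

lemma toWord_lt_toWord_iff {n : ℕ} (π : Perm (Fin n)) {i j : ℕ} (hi : i < n) (hj : j < n) :
    toWord n π i < toWord n π j ↔ π ⟨i, hi⟩ < π ⟨j, hj⟩ := by
  rw [toWord, toWord, dif_pos hi, dif_pos hj, Fin.lt_def, Nat.add_lt_add_iff_right]

variable {k m : ℕ}

lemma isDecreasingPrefix_toWord_iff (π : Perm (Fin (k + m))) :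
    IsDecreasingPrefix (toWord (k + m) π) k ↔ StrictAnti fun i : Fin k => π (Fin.castAdd m i) := by
  refine ⟨fun h i j hij => ?_, fun h i hi => ?_⟩
  · have := h.strictAntiOn (show (i : ℕ) ∈ Set.Iio k from i.2) j.2 hij
    rwa [toWord_lt_toWord_iff π (by omega) (by omega)] at this
  · rw [toWord_lt_toWord_iff π (by omega) (by omega)]
    exact h (show (⟨i, by omega⟩ : Fin k) < ⟨i + 1, hi⟩ from Nat.lt_succ_self i)

lemma descentsFrom_toWord_eq_desCount {π : Perm (Fin (k + m))} {σ : Perm (Fin m)}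
    {e : Fin m → Fin (k + m)} (he : StrictMono e) (h : ∀ j, π (Fin.natAdd k j) = e (σ j)) :
    descentsFrom (toWord (k + m) π) k (k + m) = desCount (toWord m σ) m := by
  rw [descentsFrom_add]
  refine desCount_congr fun i hi => ?_
  rw [toWord_lt_toWord_iff π (by omega) (by omega), toWord_lt_toWord_iff σ hi (by omega)]
  exact (congrArg₂ (· < ·) (h ⟨i + 1, hi⟩) (h ⟨i, by omega⟩)).to_iff.trans he.lt_iff_lt

end Permutations

section Bijection

open Equiv

variable {k m : ℕ}

noncomputable def complEquivFin (A : Finset (Fin (k + m))) (hA : A.card = k) :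
    Fin m ≃ {x // x ∉ A} :=
  (Aᶜ.orderIsoOfFin (by rw [card_compl, hA, Fintype.card_fin, Nat.add_sub_cancel_left])).toEquiv.trans
    (subtypeEquivRight fun _ => mem_compl)

lemma strictMono_complEquivFin (A : Finset (Fin (k + m))) (hA : A.card = k) :
    StrictMono fun j => (complEquivFin A hA j : Fin (k + m)) := by
  simpa [complEquivFin] using (Aᶜ.orderEmbOfFin _).strictMono

lemma complEquivFin_congr {A B : Finset (Fin (k + m))} (h : A = B) (hA : A.card = k)
    (hB : B.card = k) (j : Fin m) :
    (complEquivFin A hA j : Fin (k + m)) = complEquivFin B hB j := by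
  subst h; rfl

/-- `A` listed in decreasing order, followed by the complement of `A` in the relative order `σ`. -/
noncomputable def prependDecreasing (A : Finset (Fin (k + m))) (hA : A.card = k)
    (σ : Perm (Fin m)) : Perm (Fin (k + m)) :=
  finSumFinEquiv.symm.trans <|
    (sumCongr (Fin.revPerm.trans (A.orderIsoOfFin hA).toEquiv) (σ.trans (complEquivFin A hA))).trans
      (sumCompl (· ∈ A))

section prependDecreasing

variable (A : Finset (Fin (k + m))) (hA : A.card = k) (σ : Perm (Fin m))

lemma prependDecreasing_castAdd (i : Fin k) :
    prependDecreasing A hA σ (Fin.castAdd m i) = A.orderEmbOfFin hA (Fin.rev i) := by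
  simp [prependDecreasing, coe_orderIsoOfFin_apply]

lemma prependDecreasing_natAdd (j : Fin m) :
    prependDecreasing A hA σ (Fin.natAdd k j) = complEquivFin A hA (σ j) := by
  simp [prependDecreasing]

lemma isDecreasingPrefix_prependDecreasing :
    IsDecreasingPrefix (toWord (k + m) (prependDecreasing A hA σ)) k := by
  rw [isDecreasingPrefix_toWord_iff]
  simp only [prependDecreasing_castAdd]
  exact (A.orderEmbOfFin hA).strictMono.comp_strictAnti Fin.rev_strictAnti

lemma descentsFrom_prependDecreasing :
    descentsFrom (toWord (k + m) (prependDecreasing A hA σ)) k (k + m) = desCount (toWord m σ) m :=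
  descentsFrom_toWord_eq_desCount (strictMono_complEquivFin A hA) (prependDecreasing_natAdd A hA σ)

end prependDecreasing

def prefixSet (π : Perm (Fin (k + m))) : Finset (Fin (k + m)) :=
  univ.map ((Fin.castAddEmb m).trans π.toEmbedding)

lemma card_prefixSet (π : Perm (Fin (k + m))) : (prefixSet π).card = k := by
  simp [prefixSet]

lemma natAdd_notMem_prefixSet (π : Perm (Fin (k + m))) (j : Fin m) :
    π (Fin.natAdd k j) ∉ prefixSet π := by
  simp only [prefixSet, mem_map, mem_univ, true_and, Function.Embedding.trans_apply,
    Fin.castAddEmb_apply, Equiv.coe_toEmbedding, EmbeddingLike.apply_eq_iff_eq, not_exists]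
  intro i h
  have := congrArg Fin.val h
  simp only [Fin.val_castAdd, Fin.val_natAdd] at this
  omega

noncomputable def suffixPattern (π : Perm (Fin (k + m))) : Perm (Fin m) :=
  (ofBijective (fun j => (⟨π (Fin.natAdd k j), natAdd_notMem_prefixSet π j⟩ : {x // x ∉ prefixSet π}))
    ((Fintype.bijective_iff_injective_and_card _).2
      ⟨fun _ _ h => Fin.natAdd_injective m k (π.injective (congrArg Subtype.val h)),
        by simp [card_prefixSet]⟩)).trans
    (complEquivFin (prefixSet π) (card_prefixSet π)).symm

lemma complEquivFin_suffixPattern (π : Perm (Fin (k + m))) (j : Fin m) :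
    (complEquivFin (prefixSet π) (card_prefixSet π) (suffixPattern π j) : Fin (k + m))
      = π (Fin.natAdd k j) := by
  simp [suffixPattern]

lemma prefixSet_prependDecreasing (A : Finset (Fin (k + m))) (hA : A.card = k) (σ : Perm (Fin m)) :
    prefixSet (prependDecreasing A hA σ) = A := by
  refine eq_of_subset_of_card_le (fun x hx => ?_) (by rw [hA, card_prefixSet])
  obtain ⟨i, -, rfl⟩ := mem_map.1 hx
  simp [prependDecreasing_castAdd, orderEmbOfFin_mem]

lemma suffixPattern_prependDecreasing (A : Finset (Fin (k + m))) (hA : A.card = k)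
    (σ : Perm (Fin m)) : suffixPattern (prependDecreasing A hA σ) = σ := by
  refine Equiv.ext fun j => (complEquivFin A hA).injective (Subtype.ext ?_)
  rw [← prependDecreasing_natAdd A hA σ, ← complEquivFin_suffixPattern]
  exact (complEquivFin_congr (prefixSet_prependDecreasing A hA σ) _ hA _).symm

lemma prependDecreasing_prefixSet_suffixPattern {π : Perm (Fin (k + m))}
    (hπ : IsDecreasingPrefix (toWord (k + m) π) k) :
    prependDecreasing (prefixSet π) (card_prefixSet π) (suffixPattern π) = π := by
  refine Equiv.ext fun x => ?_
  induction x using Fin.addCases with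
  | left i =>
    have hmono : StrictMono fun i => π (Fin.castAdd m (Fin.rev i)) :=
      ((isDecreasingPrefix_toWord_iff π).1 hπ).comp Fin.rev_strictAnti
    rw [prependDecreasing_castAdd, ← orderEmbOfFin_unique (card_prefixSet π)
      (fun i => mem_map_of_mem _ (mem_univ (Fin.rev i))) hmono]
    simp [Fin.rev_rev]
  | right j => rw [prependDecreasing_natAdd, complEquivFin_suffixPattern]

noncomputable def decreasingPrefixEquiv :
    {π : Perm (Fin (k + m)) // IsDecreasingPrefix (toWord (k + m) π) k}
      ≃ {A : Finset (Fin (k + m)) // A.card = k} × Perm (Fin m) where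
  toFun π := (⟨prefixSet π.1, card_prefixSet π.1⟩, suffixPattern π.1)
  invFun p := ⟨prependDecreasing p.1.1 p.1.2 p.2, isDecreasingPrefix_prependDecreasing _ _ _⟩
  left_inv π := Subtype.ext (prependDecreasing_prefixSet_suffixPattern π.2)
  right_inv := fun ⟨⟨A, hA⟩, σ⟩ => Prod.ext (Subtype.ext (prefixSet_prependDecreasing A hA σ))
    (suffixPattern_prependDecreasing A hA σ)

end Bijection

theorem sum_filter_isDecreasingPrefix_toWord {M : Type*} [AddCommMonoid M] (k m : ℕ) (f : ℕ → M) :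
    ∑ π ∈ univ.filter (fun π : Equiv.Perm (Fin (k + m)) => IsDecreasingPrefix (toWord (k + m) π) k),
        f (descentsFrom (toWord (k + m) π) k (k + m))
      = (k + m).choose k • ∑ σ : Equiv.Perm (Fin m), f (desCount (toWord m σ) m) := by
  calc _ = ∑ π : {π : Equiv.Perm (Fin (k + m)) // IsDecreasingPrefix (toWord (k + m) π) k},
        f (descentsFrom (toWord (k + m) π.1) k (k + m)) := sum_subtype _ (by simp) _
    _ = ∑ p : {A : Finset (Fin (k + m)) // A.card = k} × Equiv.Perm (Fin m),
        f (desCount (toWord m p.2) m) :=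
      (Fintype.sum_equiv decreasingPrefixEquiv.symm _ _ fun p =>
        congrArg f (descentsFrom_prependDecreasing p.1.1 p.1.2 p.2).symm).symm
    _ = _ := by
      simp only [Fintype.sum_prod_type, sum_const, card_univ, Fintype.card_finset_len,
        Fintype.card_fin]

theorem eulerian_recurrence :
    F 0 = 1 ∧ ∀ n, 1 ≤ n →
      F n = ∑ k ∈ Icc 1 n, (n.choose k : Polynomial ℤ) * (X - 1) ^ (k - 1) * F (n - k) := by
  refine ⟨by simp [F, desCount], fun n hn => ?_⟩
  calc F n = ∑ π : Equiv.Perm (Fin n), ∑ k ∈ (Icc 1 n).filter (IsDecreasingPrefix (toWord n π)),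
        (X - 1) ^ (k - 1) * X ^ descentsFrom (toWord n π) k n :=
      sum_congr rfl fun π _ => pow_desCount_eq_sum X hn
    _ = ∑ k ∈ Icc 1 n, (X - 1) ^ (k - 1) * ∑ π ∈ univ.filter
          (fun π : Equiv.Perm (Fin n) => IsDecreasingPrefix (toWord n π) k),
        X ^ descentsFrom (toWord n π) k n := by
      simp_rw [mul_sum]
      exact sum_comm' fun _ _ => by simp [and_comm]
    _ = _ := sum_congr rfl fun k hk => by
      obtain ⟨m, rfl⟩ := Nat.exists_eq_add_of_le (mem_Icc.1 hk).2
      rw [sum_filter_isDecreasingPrefix_toWord k m (X ^ ·), Nat.add_sub_cancel_left, nsmul_eq_mul, F]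
      ring
end

section
/- Let a(n,k) = Σ_{n ≥ t_1 > ⋯ > t_k ≥ 1} Π_{j=1}^{k−1} (q^{t_j − t_{j+1} − 1} − 1) and b(n,k) = Σ_{n ≥ t_1 > ⋯ > t_k ≥ 1} q^{−t_1} Π_{j=1}^{k−1} (q^{t_j − t_{j+1} − 1} − 1). Then for n ≥ 1 and k ≥ 2: a(n,k) = a(n−1,k) + q^{n−1} b(n−1,k−1) − a(n−1,k−1), and b(n,k) = b(n−1,k) + q^{−n}(q^{n−1} b(n−1,k−1) − a(n−1,k−1)). -/
open Finset

/-- `a n k = Σ_{n ≥ t_1 > ⋯ > t_k ≥ 1} Π_{j=1}^{k-1} (q^{t_j - t_{j+1} - 1} - 1)`; the sum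
ranges over k-element subsets `S = {t_1 > ⋯ > t_k}` of `{1,...,n}`, and if `L` is `S`
sorted increasingly then `t_j = L[k-j]` (0-based). -/
noncomputable def a (n k : ℕ) : LaurentPolynomial ℤ :=
  ∑ S ∈ (Finset.Icc 1 n).powersetCard k,
    ∏ j ∈ range (k - 1),
      ((LaurentPolynomial.T
          (((S.sort (· ≤ ·)).getD (k - j - 1) 0 : ℤ) -
            ((S.sort (· ≤ ·)).getD (k - j - 2) 0 : ℤ) - 1) : LaurentPolynomial ℤ) - 1)

/-- `b n k = Σ_{n ≥ t_1 > ⋯ > t_k ≥ 1} q^{-t_1} Π_{j=1}^{k-1} (q^{t_j - t_{j+1} - 1} - 1)`. -/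
noncomputable def b (n k : ℕ) : LaurentPolynomial ℤ :=
  ∑ S ∈ (Finset.Icc 1 n).powersetCard k,
    (LaurentPolynomial.T (-((S.sort (· ≤ ·)).getD (k - 1) 0 : ℤ)) : LaurentPolynomial ℤ) *
      ∏ j ∈ range (k - 1),
        ((LaurentPolynomial.T
            (((S.sort (· ≤ ·)).getD (k - j - 1) 0 : ℤ) -
              ((S.sort (· ≤ ·)).getD (k - j - 2) 0 : ℤ) - 1) : LaurentPolynomial ℤ) - 1)

/-!
Split the `k`-subsets of `{1, …, n}` according to whether they contain `n`. Those that do are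
`S ∪ {n}` with `S` a `(k-1)`-subset of `{1, …, n-1}` whose largest element is `t`; adding `n` on
top of the chain `S` multiplies its product by the one new gap factor
`q^(n - t - 1) - 1 = q^(n-1) q^(-t) - 1`, so these subsets contribute
`q^(n-1) b(n-1, k-1) - a(n-1, k-1)` to `a(n, k)`, and `q^(-n)` times that to `b(n, k)`, since `n`
is their new top element `t_1`.
-/

theorem Finset.sum_powersetCard_succ_insert {α M : Type*} [DecidableEq α] [AddCommMonoid M]
    {x : α} {s : Finset α} (hx : x ∉ s) (k : ℕ) (f : Finset α → M) :
    ∑ t ∈ (insert x s).powersetCard (k + 1), f t =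
      ∑ t ∈ s.powersetCard (k + 1), f t + ∑ t ∈ s.powersetCard k, f (insert x t) := by
  rw [powersetCard_succ_insert hx, sum_union, sum_image]
  · exact insert_erase_invOn.2.injOn.mono fun t ht ↦ notMem_mono (mem_powersetCard.1 ht).1 hx
  · aesop (add simp [disjoint_left, mem_powersetCard, insert_subset_iff])

theorem Finset.sort_insert_of_forall_lt {α : Type*} [LinearOrder α] {x : α} {s : Finset α}
    (hx : ∀ y ∈ s, y < x) : (insert x s).sort (· ≤ ·) = s.sort (· ≤ ·) ++ [x] := by
  have hnodup : (s.sort (· ≤ ·) ++ [x]).Nodup :=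
    List.nodup_append.2 ⟨sort_nodup _ _, List.nodup_singleton x,
      fun y hy z hz ↦ (hx y ((mem_sort _).1 hy)).ne.trans_eq (List.mem_singleton.1 hz).symm⟩
  have hset : (s.sort (· ≤ ·) ++ [x]).toFinset = insert x s := by
    rw [List.toFinset_append, sort_toFinset]; simp
  rw [← hset, List.toFinset_sort _ hnodup]
  exact List.pairwise_append.2 ⟨pairwise_sort _ _, List.pairwise_singleton _ _,
    fun y hy z hz ↦ (hx y ((mem_sort _).1 hy)).le.trans_eq (List.mem_singleton.1 hz).symm⟩

theorem List.prod_range_getD_append_singleton {α M : Type*} [CommMonoid M] (f : α → α → M)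
    (L : List α) (x d : α) {m : ℕ} (hL : L.length = m + 1) :
    ∏ j ∈ Finset.range (m + 1),
        f ((L ++ [x]).getD (m + 2 - j - 1) d) ((L ++ [x]).getD (m + 2 - j - 2) d) =
      f x (L.getD m d) *
        ∏ j ∈ Finset.range m, f (L.getD (m + 1 - j - 1) d) (L.getD (m + 1 - j - 2) d) := by
  have hlow : ∀ i ≤ m, (L ++ [x]).getD i d = L.getD i d :=
    fun i hi ↦ getD_append _ _ _ _ (by omega)
  have htop : (L ++ [x]).getD (m + 2 - 1) d = x := by
    rw [getD_append_right _ _ _ _ (by omega)]; simp [hL]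
  rw [Finset.prod_range_succ', mul_comm]
  congr 1
  · rw [Nat.sub_zero, htop, Nat.add_sub_cancel, hlow m le_rfl]
  · refine Finset.prod_congr rfl fun j hj ↦ ?_
    have hj : j < m := Finset.mem_range.1 hj
    rw [hlow _ (by omega), hlow _ (by omega), show m + 2 - (j + 1) - 1 = m + 1 - j - 1 by omega,
      show m + 2 - (j + 1) - 2 = m + 1 - j - 2 by omega]

theorem sum_powersetCard_Icc_one_succ {M : Type*} [AddCommMonoid M] (n k : ℕ)
    (f : Finset ℕ → M) :
    ∑ S ∈ (Icc 1 (n + 1)).powersetCard (k + 1), f S =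
      ∑ S ∈ (Icc 1 n).powersetCard (k + 1), f S +
        ∑ S ∈ (Icc 1 n).powersetCard k, f (insert (n + 1) S) := by
  rw [← insert_Icc_right_eq_Icc_add_one (by omega), sum_powersetCard_succ_insert (by simp)]

open LaurentPolynomial

noncomputable def gapProd (k : ℕ) (L : List ℕ) : LaurentPolynomial ℤ :=
  ∏ j ∈ range (k - 1), (T ((L.getD (k - j - 1) 0 : ℤ) - (L.getD (k - j - 2) 0 : ℤ) - 1) - 1)

theorem a_eq_sum_gapProd (n k : ℕ) :
    a n k = ∑ S ∈ (Icc 1 n).powersetCard k, gapProd k (S.sort (· ≤ ·)) := rfl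

theorem b_eq_sum_gapProd (n k : ℕ) :
    b n k = ∑ S ∈ (Icc 1 n).powersetCard k,
      T (-((S.sort (· ≤ ·)).getD (k - 1) 0 : ℤ)) * gapProd k (S.sort (· ≤ ·)) := rfl

theorem gapProd_append_singleton (L : List ℕ) (x : ℕ) {m : ℕ} (hL : L.length = m + 1) :
    gapProd (m + 2) (L ++ [x]) =
      (T ((x : ℤ) - L.getD m 0 - 1) - 1) * gapProd (m + 1) L :=
  L.prod_range_getD_append_singleton (fun u v : ℕ ↦ T ((u : ℤ) - v - 1) - 1) x 0 hL

theorem sort_insert_succ_of_mem_powersetCard {n k : ℕ} {S : Finset ℕ}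
    (hS : S ∈ (Icc 1 n).powersetCard k) :
    (insert (n + 1) S).sort (· ≤ ·) = S.sort (· ≤ ·) ++ [n + 1] :=
  sort_insert_of_forall_lt fun _ hy ↦
    Nat.lt_add_one_of_le (mem_Icc.1 ((mem_powersetCard.1 hS).1 hy)).2

theorem getD_sort_insert_succ_of_mem_powersetCard {n k : ℕ} {S : Finset ℕ}
    (hS : S ∈ (Icc 1 n).powersetCard k) :
    ((insert (n + 1) S).sort (· ≤ ·)).getD k 0 = n + 1 := by
  have hlen : (S.sort (· ≤ ·)).length = k := by rw [length_sort, (mem_powersetCard.1 hS).2]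
  rw [sort_insert_succ_of_mem_powersetCard hS, List.getD_append_right _ _ _ _ hlen.le, hlen,
    Nat.sub_self, List.getD_cons_zero]

theorem sum_gapProd_insert_succ (n m : ℕ) :
    ∑ S ∈ (Icc 1 n).powersetCard (m + 1),
        gapProd (m + 2) ((insert (n + 1) S).sort (· ≤ ·)) =
      T (n : ℤ) * b n (m + 1) - a n (m + 1) := by
  rw [a_eq_sum_gapProd, b_eq_sum_gapProd, mul_sum, ← sum_sub_distrib]
  refine sum_congr rfl fun S hS ↦ ?_
  have hlen : (S.sort (· ≤ ·)).length = m + 1 := by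
    rw [length_sort, (mem_powersetCard.1 hS).2]
  rw [sort_insert_succ_of_mem_powersetCard hS, gapProd_append_singleton _ _ hlen, ← mul_assoc,
    ← T_add, sub_one_mul]
  congr 3
  push_cast
  ring

theorem bca_auxiliary_recurrences (n k : ℕ) (hn : 1 ≤ n) (hk : 2 ≤ k) :
    a n k = a (n - 1) k + LaurentPolynomial.T ((n : ℤ) - 1) * b (n - 1) (k - 1)
              - a (n - 1) (k - 1) ∧
    b n k = b (n - 1) k + LaurentPolynomial.T (-(n : ℤ)) *
              (LaurentPolynomial.T ((n : ℤ) - 1) * b (n - 1) (k - 1) - a (n - 1) (k - 1)) := by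
  obtain ⟨m, rfl⟩ : ∃ m, k = m + 2 := ⟨k - 2, by omega⟩
  obtain ⟨n, rfl⟩ : ∃ n', n = n' + 1 := ⟨n - 1, by omega⟩
  simp only [show m + 2 - 1 = m + 1 from rfl, Nat.add_sub_cancel, Nat.cast_add, Nat.cast_one,
    add_sub_cancel_right, add_sub_assoc, ← sum_gapProd_insert_succ]
  constructor
  · rw [a_eq_sum_gapProd, a_eq_sum_gapProd, sum_powersetCard_Icc_one_succ]
  · rw [b_eq_sum_gapProd, b_eq_sum_gapProd, sum_powersetCard_Icc_one_succ, mul_sum]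
    refine congrArg _ (sum_congr rfl fun S hS ↦ ?_)
    rw [show m + 2 - 1 = m + 1 from rfl, getD_sort_insert_succ_of_mem_powersetCard hS]
    push_cast
    rfl
end
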